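/- Let E be a Banach space and P, Q bounded projectors on E lying in the same connected component of the space of bounded projectors. Then the ranges of P and Q are isomorphic as Banach spaces, and the kernels of P and Q are isomorphic. -/

import Mathlib

/-!
For idempotents `p, q` of a ring, `u = q p + (1 - q)(1 - p)` satisfies `u p = q u`, and
`u` times its mirror image `q ↦ p` is `1 - (p - q)²` in either order. In a complete normed ring
this is a unit once `‖p - q‖ < 1`, so nearby idempotents are conjugate; conjugacy is therefore
locally constant on the idempotents and hence constant on their connected components. An invertible
operator `U` with `U P = Q U` maps the range and kernel of `P` onto those of `Q`.
-/

theorem isUnit_of_isUnit_mul_of_isUnit_mul_swap {M : Type*} [Monoid M] {a b : M}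
    (hab : IsUnit (a * b)) (hba : IsUnit (b * a)) : IsUnit a := by
  obtain ⟨u, hu⟩ := hab
  obtain ⟨v, hv⟩ := hba
  have hright : a * (b * ↑u⁻¹) = 1 := by rw [← mul_assoc, ← hu, Units.mul_inv]
  have hleft : (↑v⁻¹ * b) * a = 1 := by rw [mul_assoc, ← hv, Units.inv_mul]
  rw [left_inv_eq_right_inv hleft hright] at hleft
  exact isUnit_iff_exists.mpr ⟨_, hright, hleft⟩

namespace IsIdempotentElem

variable {R : Type*}

section Ring

variable [Ring R] {p q : R}

def conjugator (p q : R) : R := q * p + (1 - q) * (1 - p)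

theorem semiconjBy_conjugator (hp : IsIdempotentElem p) (hq : IsIdempotentElem q) :
    SemiconjBy (conjugator p q) p q := by
  -- both sides equal `q * p`
  have hp : p * p = p := hp
  have hq : q * q = q := hq
  have hq' : ∀ x, q * (q * x) = q * x := fun x ↦ by rw [← mul_assoc, hq]
  unfold SemiconjBy conjugator
  simp only [add_mul, mul_add, mul_sub, sub_mul, mul_one, one_mul, mul_assoc, hp, hq, hq']
  abel

theorem conjugator_mul_conjugator (hp : IsIdempotentElem p) (hq : IsIdempotentElem q) :
    conjugator p q * conjugator q p = 1 - (p - q) ^ 2 := by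
  have hp : p * p = p := hp
  have hq : q * q = q := hq
  have hp' : ∀ x, p * (p * x) = p * x := fun x ↦ by rw [← mul_assoc, hp]
  unfold conjugator
  simp only [sq, add_mul, mul_add, mul_sub, sub_mul, mul_one, one_mul, mul_assoc, hp, hq, hp']
  abel

end Ring

theorem isConj_of_norm_sub_lt_one [NormedRing R] [HasSummableGeomSeries R] {p q : R}
    (hp : IsIdempotentElem p) (hq : IsIdempotentElem q) (h : ‖p - q‖ < 1) : IsConj p q := by
  have hsq : ‖(p - q) ^ 2‖ < 1 :=
    (norm_pow_le' _ two_pos).trans_lt (pow_lt_one₀ (norm_nonneg _) h two_ne_zero)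
  have hunit : IsUnit (1 - (p - q) ^ 2) := (Units.oneSub _ hsq).isUnit
  have hconj : IsUnit (conjugator p q) := by
    refine isUnit_of_isUnit_mul_of_isUnit_mul_swap (b := conjugator q p) ?_ ?_
    · rwa [conjugator_mul_conjugator hp hq]
    · rwa [conjugator_mul_conjugator hq hp, ← neg_sub p q, neg_sq]
  exact ⟨hconj.unit, semiconjBy_conjugator hp hq⟩

theorem isConj_of_mem_connectedComponentIn [NormedRing R] [HasSummableGeomSeries R] {p q : R}
    (h : q ∈ connectedComponentIn {a : R | IsIdempotentElem a} p) : IsConj p q := by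
  have hp : p ∈ connectedComponentIn {a : R | IsIdempotentElem a} p :=
    mem_connectedComponentIn (connectedComponentIn_nonempty_iff.mp ⟨q, h⟩)
  refine isPreconnected_connectedComponentIn.induction₂' IsConj (fun a ha ↦ ?_)
    (fun _ _ _ _ _ _ ↦ IsConj.trans) hp h
  filter_upwards [self_mem_nhdsWithin, nhdsWithin_le_nhds (Metric.ball_mem_nhds a one_pos)]
    with b hb hab
  have hsub := connectedComponentIn_subset {a : R | IsIdempotentElem a} p
  have hconj : IsConj a b :=
    isConj_of_norm_sub_lt_one (hsub ha) (hsub hb) (by rwa [← dist_eq_norm, dist_comm])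
  exact ⟨hconj, hconj.symm⟩

end IsIdempotentElem

namespace LinearEquiv

variable {R M N : Type*} [Semiring R] [AddCommMonoid M] [AddCommMonoid N] [Module R M]
  [Module R N] (e : M ≃ₗ[R] N) {f : M →ₗ[R] M} {g : N →ₗ[R] N}

theorem map_range_eq_of_comp_eq (h : e.toLinearMap ∘ₗ f = g ∘ₗ e.toLinearMap) :
    (LinearMap.range f).map e.toLinearMap = LinearMap.range g := by
  rw [← LinearMap.range_comp, h, LinearEquiv.range_comp]

theorem map_ker_eq_of_comp_eq (h : e.toLinearMap ∘ₗ f = g ∘ₗ e.toLinearMap) :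
    (LinearMap.ker f).map e.toLinearMap = LinearMap.ker g := by
  rw [← LinearEquiv.ker_comp e f, h, LinearMap.ker_comp,
    Submodule.map_comap_eq_of_surjective e.surjective]

end LinearEquiv

theorem range_ker_isomorphic_of_connected_projectors_general
    {E : Type*} [NormedAddCommGroup E] [NormedSpace ℂ E] [CompleteSpace E]
    (P Q : E →L[ℂ] E)
    (h : Q ∈ connectedComponentIn {T : E →L[ℂ] E | T * T = T} P) :
    Nonempty (↥(LinearMap.range (P : E →ₗ[ℂ] E)) ≃L[ℂ] ↥(LinearMap.range (Q : E →ₗ[ℂ] E))) ∧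
    Nonempty (↥(LinearMap.ker (P : E →ₗ[ℂ] E)) ≃L[ℂ] ↥(LinearMap.ker (Q : E →ₗ[ℂ] E))) := by
  obtain ⟨U, hU⟩ := IsIdempotentElem.isConj_of_mem_connectedComponentIn h
  let e := ContinuousLinearEquiv.unitsEquiv ℂ E U
  have he : e.toLinearEquiv.toLinearMap ∘ₗ (P : E →ₗ[ℂ] E) =
      (Q : E →ₗ[ℂ] E) ∘ₗ e.toLinearEquiv.toLinearMap :=
    congrArg ContinuousLinearMap.toLinearMap hU
  exact ⟨⟨e.ofSubmodules _ _ (e.toLinearEquiv.map_range_eq_of_comp_eq he)⟩,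
    ⟨e.ofSubmodules _ _ (e.toLinearEquiv.map_ker_eq_of_comp_eq he)⟩⟩

/-- Two bounded projectors lying in the same connected component of the space of bounded
projectors have isomorphic ranges and isomorphic kernels. -/
theorem range_ker_isomorphic_of_connected_projectors
    {E : Type*} [NormedAddCommGroup E] [NormedSpace ℂ E] [CompleteSpace E]
    (P Q : E →L[ℂ] E) (hP : P * P = P) (hQ : Q * Q = Q)
    (h : Q ∈ connectedComponentIn {T : E →L[ℂ] E | T * T = T} P) :
    Nonempty (↥(LinearMap.range (P : E →ₗ[ℂ] E)) ≃L[ℂ] ↥(LinearMap.range (Q : E →ₗ[ℂ] E))) ∧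
    Nonempty (↥(LinearMap.ker (P : E →ₗ[ℂ] E)) ≃L[ℂ] ↥(LinearMap.ker (Q : E →ₗ[ℂ] E))) :=
  range_ker_isomorphic_of_connected_projectors_general P Q h
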